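/- arXiv:math/0703740 — 7 statements merged into one kernel-verified Lean document; each statement's English description precedes it below -/
import Mathlib

section
/- Let G be a nontrivial group with a normal abelian subgroup K, quotient Q = G/K, and let θ : Q → Aut(K) be the homomorphism induced by conjugation. If (i) every θ(Q)-orbit in K \ {1} is infinite, and (ii) the restriction of θ to FC(Q) is injective, then G is icc. -/
def IsICC (G : Type*) [Group G] : Prop :=
  Nontrivial G ∧ ∀ g : G, g ≠ 1 → {h : G | IsConj g h}.Infinite

/-- Theorem 1, sufficiency: extension of an abelian group with (i) infinite θ(Q)-orbits on
K \ {1} and (ii) θ injective on FC(Q) is icc. -/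
theorem icc_of_abelian_extension {G : Type*} [Group G] [Nontrivial G]
    (K : Subgroup G) [K.Normal] (hab : ∀ a b : K, a * b = b * a)
    (θ : G ⧸ K →* MulAut K)
    (hθ : ∀ (g : G) (k : K), ((θ (QuotientGroup.mk g) k : K) : G) = g * (k : G) * g⁻¹)
    (hi : ∀ k : K, k ≠ 1 → {x : K | ∃ q : G ⧸ K, θ q k = x}.Infinite)
    (hii : Set.InjOn θ {q : G ⧸ K | {r : G ⧸ K | IsConj q r}.Finite}) :
    IsICC G := by
  refine ⟨inferInstance, fun g hg => ?_⟩
  by_cases hgK : g ∈ K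
  · -- g ∈ K: the θ(Q)-orbit of g is infinite and lies in the conjugacy class
    have hk : (⟨g, hgK⟩ : K) ≠ 1 := fun h => hg (by simpa using congrArg Subtype.val h)
    have horb := hi ⟨g, hgK⟩ hk
    have hsub : ((↑) : K → G) '' {x : K | ∃ q, θ q ⟨g, hgK⟩ = x} ⊆ {h : G | IsConj g h} := by
      rintro _ ⟨x, ⟨q, hq⟩, rfl⟩
      obtain ⟨y, rfl⟩ := QuotientGroup.mk_surjective q
      rw [Set.mem_setOf_eq, isConj_iff]
      exact ⟨y, by rw [← hq, hθ]⟩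
    exact Set.Infinite.mono hsub (horb.image Subtype.val_injective.injOn)
  · by_contra hinf
    rw [Set.not_infinite] at hinf
    have hCg : g ∈ {h : G | IsConj g h} := IsConj.refl g
    have hconj : ∀ y : G, ∀ c ∈ {h : G | IsConj g h}, y * c * y⁻¹ ∈ {h : G | IsConj g h} := by
      intro y c hc
      exact hc.trans (isConj_iff.mpr ⟨y, rfl⟩)
    set S : Set K :=
      ((↑) : K → G) ⁻¹'
        ((fun p : G × G => p.1 * p.2⁻¹) '' ({h : G | IsConj g h} ×ˢ {h : G | IsConj g h}))
      with hS
    have hSfin : S.Finite :=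
      Set.Finite.preimage Subtype.val_injective.injOn ((hinf.prod hinf).image _)
    have hSinv : ∀ (y : G) (x : K), x ∈ S → θ (QuotientGroup.mk y) x ∈ S := by
      rintro y x ⟨⟨c, d⟩, ⟨hc, hd⟩, hx⟩
      refine ⟨(y * c * y⁻¹, y * d * y⁻¹), ⟨hconj y c hc, hconj y d hd⟩, ?_⟩
      simp only at hx ⊢
      rw [hθ, ← hx]
      group
    have hθg : θ (QuotientGroup.mk g) = 1 := by
      ext k
      suffices h : θ (QuotientGroup.mk g) k = k by simp [h]
      by_contra hne
      set w : K := θ (QuotientGroup.mk g) k * k⁻¹ with hw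
      have hwne : w ≠ 1 := fun h => hne (by rwa [hw, mul_inv_eq_one] at h)
      have hwS : w ∈ S := by
        refine ⟨(g, k * g * k⁻¹), ⟨hCg, hconj (k : G) g hCg⟩, ?_⟩
        simp only
        rw [hw, Subgroup.coe_mul, hθ]
        push_cast
        group
      refine hi w hwne (hSfin.subset ?_)
      rintro _ ⟨q, rfl⟩
      obtain ⟨y, rfl⟩ := QuotientGroup.mk_surjective q
      exact hSinv y w hwS
    have h1fc : (1 : G ⧸ K) ∈ {q : G ⧸ K | {r : G ⧸ K | IsConj q r}.Finite} := by
      have h1 : {r : G ⧸ K | IsConj 1 r} = {1} := by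
        ext r
        simp only [Set.mem_setOf_eq, Set.mem_singleton_iff, isConj_iff]
        constructor
        · rintro ⟨c, rfl⟩; group
        · rintro rfl; exact ⟨1, by group⟩
      rw [Set.mem_setOf_eq, h1]
      exact Set.finite_singleton 1
    have hgfc : (QuotientGroup.mk g : G ⧸ K) ∈
        {q : G ⧸ K | {r : G ⧸ K | IsConj q r}.Finite} := by
      refine Set.Finite.subset (hinf.image (QuotientGroup.mk : G → G ⧸ K)) ?_
      intro r hr
      rw [Set.mem_setOf_eq, isConj_iff] at hr
      obtain ⟨s, rfl⟩ := hr
      obtain ⟨y, rfl⟩ := QuotientGroup.mk_surjective s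
      exact ⟨y * g * y⁻¹, hconj y g hCg, by simp⟩
    have heq : (QuotientGroup.mk g : G ⧸ K) = 1 :=
      hii hgfc h1fc (by rw [hθg, map_one])
    exact hgK ((QuotientGroup.eq_one_iff g).mp heq)
end

section
/- Let G be a group with abelian normal subgroup K and quotient map ρ : G → Q = G/K. Suppose u ∈ G \ K has finite conjugacy class in G. Then ρ(u) is a nontrivial element of FC(Q), and either some nontrivial element of K has finite conjugacy class in G, or u commutes with every element of K. -/
/-!
Writing `C(g)` for the conjugacy class of `g`, the commutator `⁅u, k⁆ = u * (k * u⁻¹ * k⁻¹)`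
has its class inside `C(u) * C(u)⁻¹`, which is finite when `C(u)` is. If `u` fails to
commute with some `k ∈ K`, this commutator is therefore a nontrivial element of the normal
subgroup `K` with finite class. The class of `u` in `G ⧸ K` is the image of `C(u)`.
-/

open Pointwise
open scoped commutatorElement

section ConjugatesOf

variable {G : Type*} [Group G]

theorem conjugatesOf_mul_subset (a b : G) :
    conjugatesOf (a * b) ⊆ conjugatesOf a * conjugatesOf b := by
  rintro x hx
  obtain ⟨c, rfl⟩ := isConj_iff.mp hx
  refine ⟨c * a * c⁻¹, isConj_iff.mpr ⟨c, rfl⟩, c * b * c⁻¹, isConj_iff.mpr ⟨c, rfl⟩, ?_⟩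
  group

theorem conjugatesOf_inv (a : G) : conjugatesOf a⁻¹ = (conjugatesOf a)⁻¹ := by
  ext x
  simp only [conjugatesOf, Set.mem_inv, Set.mem_ofPred_eq, isConj_iff]
  refine ⟨fun ⟨c, hc⟩ ↦ ⟨c, by rw [← hc]; group⟩, fun ⟨c, hc⟩ ↦ ⟨c, ?_⟩⟩
  rw [← inv_inv x, ← hc]
  group

theorem conjugatesOf_map_of_surjective {H : Type*} [Group H] {f : G →* H}
    (hf : Function.Surjective f) (g : G) : conjugatesOf (f g) = f '' conjugatesOf g := by
  ext y
  constructor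
  · intro hy
    obtain ⟨c, rfl⟩ := isConj_iff.mp hy
    obtain ⟨d, rfl⟩ := hf c
    exact ⟨d * g * d⁻¹, isConj_iff.mpr ⟨d, rfl⟩, by simp⟩
  · rintro ⟨x, hx, rfl⟩
    exact f.map_isConj hx

theorem Set.Finite.conjugatesOf_commutatorElement {u : G} (hu : (conjugatesOf u).Finite)
    (k : G) : (conjugatesOf ⁅u, k⁆).Finite := by
  have hconj : conjugatesOf (k * u⁻¹ * k⁻¹) = (conjugatesOf u)⁻¹ := by
    rw [(isConj_iff.mpr ⟨k, rfl⟩ : IsConj u⁻¹ _).conjugatesOf_eq.symm, conjugatesOf_inv]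
  refine (hu.mul hu.inv).subset ?_
  calc conjugatesOf ⁅u, k⁆ = conjugatesOf (u * (k * u⁻¹ * k⁻¹)) := by
        rw [commutatorElement_def]; group
    _ ⊆ conjugatesOf u * conjugatesOf (k * u⁻¹ * k⁻¹) := conjugatesOf_mul_subset _ _
    _ = conjugatesOf u * (conjugatesOf u)⁻¹ := by rw [hconj]

end ConjugatesOf

theorem finite_class_outside_abelian_normal_general {G : Type*} [Group G]
    (K : Subgroup G) [K.Normal]
    (u : G) (hu : u ∉ K) (hfin : {x : G | IsConj u x}.Finite) :
    ((QuotientGroup.mk u : G ⧸ K) ≠ 1 ∧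
      {r : G ⧸ K | IsConj (QuotientGroup.mk u : G ⧸ K) r}.Finite) ∧
    ((∃ k : G, k ∈ K ∧ k ≠ 1 ∧ {x : G | IsConj k x}.Finite) ∨
      ∀ k ∈ K, Commute u k) := by
  refine ⟨⟨mt (QuotientGroup.eq_one_iff u).mp hu, ?_⟩, ?_⟩
  · rw [← conjugatesOf, ← QuotientGroup.mk'_apply,
      conjugatesOf_map_of_surjective (QuotientGroup.mk'_surjective K)]
    exact hfin.image _
  · by_contra! h
    obtain ⟨hfinK, k, hk, hcomm⟩ := h
    exact hfinK ⁅u, k⁆ (mul_mem (‹K.Normal›.conj_mem k hk u) (inv_mem hk))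
      (mt commutatorElement_eq_one_iff_commute.mp hcomm)
      (Set.Finite.conjugatesOf_commutatorElement hfin k)

theorem finite_class_outside_abelian_normal {G : Type*} [Group G]
    (K : Subgroup G) [K.Normal] (hab : ∀ a b : K, a * b = b * a)
    (u : G) (hu : u ∉ K) (hfin : {x : G | IsConj u x}.Finite) :
    ((QuotientGroup.mk u : G ⧸ K) ≠ 1 ∧
      {r : G ⧸ K | IsConj (QuotientGroup.mk u : G ⧸ K) r}.Finite) ∧
    ((∃ k : G, k ∈ K ∧ k ≠ 1 ∧ {x : G | IsConj k x}.Finite) ∨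
      ∀ k ∈ K, Commute u k) :=
  finite_class_outside_abelian_normal_general K u hu hfin
end

section
/- Let G be a nontrivial group with a normal centerless subgroup K, and let π : G → Aut(K) be the conjugation homomorphism and θ : G/K → Out(K) the induced homomorphism. If (i) K contains no nontrivial normal subgroup N, either finite or isomorphic to ℤⁿ, that is preserved by π(G) and contains only finite π(G)-orbits, and (ii) the restriction of θ to FC(G/K) is injective, then G is icc. -/
def Inn (K : Type*) [Group K] : Subgroup (MulAut K) := (MulAut.conj : K →* MulAut K).range

instance Inn.normal (K : Type*) [Group K] : (Inn K).Normal := by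
  constructor
  rintro x ⟨k, rfl⟩ φ
  refine ⟨φ k, ?_⟩
  ext h
  simp [MulAut.conj_apply, map_mul, mul_assoc]

def Out (K : Type*) [Group K] := MulAut K ⧸ Inn K

instance (K : Type*) [Group K] : Group (Out K) :=
  inferInstanceAs (Group (MulAut K ⧸ Inn K))

/-!
Suppose `g ≠ 1` has a finite conjugacy class `C`. If `g ∈ K`, then `C` is a finite
`π(G)`-invariant subset of `K`. Otherwise the commutators `[h, k]` with `h ∈ C`, `k ∈ K` lie in
`C * C⁻¹`, so they again form a finite `π(G)`-invariant subset of `K`; it cannot be trivial, for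
then `π g = 1`, so `θ (gK) = 1` with `gK` in `FC(G/K)`, and injectivity gives `g ∈ K`.

A finite invariant set `T ≠ {1}` contradicts (i): `N = ⟨T⟩` has finite `π(G)`-orbits and, as `N`
permutes `T` by conjugation, its centre has finite index. Then `N` has finitely many commutators,
so `[N, N]` is finite by Schur's theorem. Either `[N, N]` violates (i), or `N` is finitely
generated abelian and its torsion subgroup (if nontrivial) or `N` itself (if torsion-free, hence
`≅ ℤⁿ`) does.
-/

open Subgroup
open scoped commutatorElement

namespace Subgroup

variable {G : Type*} [Group G]

theorem commutatorElement_mul_of_mem_center {a b z w : G} (hz : z ∈ center G)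
    (hw : w ∈ center G) : ⁅a * z, b * w⁆ = ⁅a, b⁆ := by
  have conj_eq : ∀ {c}, c ∈ center G → ∀ x, c * x * c⁻¹ = x := fun hc x => by
    rw [← mem_center_iff.mp hc x, mul_inv_cancel_right]
  calc ⁅a * z, b * w⁆ = a * (z * (b * w) * z⁻¹) * a⁻¹ * w⁻¹ * b⁻¹ := by group
    _ = a * b * (w * a⁻¹ * w⁻¹) * b⁻¹ := by rw [conj_eq hz]; group
    _ = ⁅a, b⁆ := by rw [conj_eq hw, commutatorElement_def]

theorem finite_commutatorSet_of_finiteIndex_center [(center G).FiniteIndex] :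
    Finite (commutatorSet G) := by
  let f : G ⧸ center G → G ⧸ center G → G :=
    Quotient.lift₂ (fun a b => ⁅a, b⁆) fun a b a' b' ha hb => by
      rw [← commutatorElement_mul_of_mem_center (QuotientGroup.leftRel_apply.mp ha)
        (QuotientGroup.leftRel_apply.mp hb), mul_inv_cancel_left, mul_inv_cancel_left]
  refine ((Set.finite_range (Function.uncurry f)).subset ?_).to_subtype
  rintro _ ⟨a, b, rfl⟩
  exact ⟨((a : G ⧸ center G), (b : G ⧸ center G)), rfl⟩

theorem finiteIndex_centralizer_of_finite_isConj {g : G} (hg : {h | IsConj h g}.Finite) :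
    (centralizer {g}).FiniteIndex := by
  have h := index_comap_of_surjective (MulAction.stabilizer (ConjAct G) g)
    (f := ConjAct.toConjAct.toMonoidHom) ConjAct.toConjAct.surjective
  rw [MulAction.index_stabilizer] at h
  rw [centralizer_eq_comap_stabilizer]
  exact ⟨h ▸ Set.ncard_ne_zero_of_mem (ConjAct.mem_orbit_conjAct.mpr (IsConj.refl g))
    (hg.subset fun _ => ConjAct.mem_orbit_conjAct.mp)⟩

theorem finiteIndex_center_of_finite_isConj {s : Set G} (hs : closure s = ⊤) (hfin : s.Finite)
    (hconj : ∀ g ∈ s, {h | IsConj h g}.Finite) : (center G).FiniteIndex := by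
  rw [center_eq_iInf hs, ← hfin.coe_toFinset]
  exact finiteIndex_iInf' _ fun g hg => by
    simpa using finiteIndex_centralizer_of_finite_isConj (hconj g (hfin.mem_toFinset.mp hg))

theorem finiteIndex_center_closure_of_finite {T : Set G} (hT : T.Finite)
    (hconj : ∀ k ∈ closure T, ∀ t ∈ T, k * t * k⁻¹ ∈ T) :
    (center (closure T)).FiniteIndex := by
  refine finiteIndex_center_of_finite_isConj closure_closure_coe_preimage
    (hT.preimage Subtype.val_injective.injOn) fun t ht => ?_
  refine (hT.preimage Subtype.val_injective.injOn).subset fun h hh => ?_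
  obtain ⟨c, rfl⟩ := isConj_iff.mp (isConj_comm.mp hh)
  exact hconj c c.2 t ht

end Subgroup

namespace CommGroup

variable {A : Type*} [CommGroup A] [Group.FG A]

theorem finite_torsion_of_fg : Finite (torsion A) := by
  have : Module.Finite ℤ (Additive A) := Module.Finite.iff_addGroup_fg.mpr inferInstance
  have : (AddCommGroup.torsion (Additive A) : Set (Additive A)).Finite := by
    have := Module.finite_of_fg_torsion (Submodule.torsion ℤ (Additive A))
      Submodule.torsion_isTorsion
    rw [← Submodule.torsion_int]
    exact Set.toFinite _
  exact this.to_subtype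

theorem exists_mulEquiv_free_of_fg [IsMulTorsionFree A] :
    ∃ n : ℕ, Nonempty (A ≃* Multiplicative (Fin n → ℤ)) := by
  have : Module.Finite ℤ (Additive A) := Module.Finite.iff_addGroup_fg.mpr inferInstance
  exact ⟨_, ⟨AddEquiv.toMultiplicativeRight
    (Module.finBasis ℤ (Additive A)).equivFun.toAddEquiv⟩⟩

end CommGroup

section Invariant

variable {Γ K : Type*} [Group Γ] [Group K] (π : Γ →* MulAut K)

def IsInvariantUnder (S : Set K) : Prop := ∀ γ, ∀ x ∈ S, π γ x ∈ S

/-- Hypothesis (i) of the theorem says that no subgroup of `K` has this property. -/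
def IsFiniteOrbitSubgroup (N : Subgroup K) : Prop :=
  N ≠ ⊥ ∧ N.Normal ∧ IsInvariantUnder π N ∧
    (Finite N ∨ ∃ n : ℕ, Nonempty (N ≃* Multiplicative (Fin n → ℤ))) ∧
    ∀ n ∈ N, (Set.range fun γ => π γ n).Finite

variable {π}

theorem IsInvariantUnder.conj_mem (hinn : Inn K ≤ π.range) {S : Set K}
    (hS : IsInvariantUnder π S) (k : K) {x : K} (hx : x ∈ S) : k * x * k⁻¹ ∈ S := by
  obtain ⟨γ, hγ⟩ := hinn ⟨k, rfl⟩
  simpa [hγ, MulAut.conj_apply] using hS γ x hx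

theorem IsInvariantUnder.normal (hinn : Inn K ≤ π.range) {N : Subgroup K}
    (hN : IsInvariantUnder π N) : N.Normal :=
  ⟨fun _ hn k => hN.conj_mem hinn k hn⟩

theorem IsInvariantUnder.closure {T : Set K} (hT : IsInvariantUnder π T) :
    IsInvariantUnder π (Subgroup.closure T) := by
  intro γ x hx
  have : (Subgroup.closure T).map (π γ).toMonoidHom ≤ Subgroup.closure T := by
    rw [MonoidHom.map_closure]
    exact closure_mono (by rintro _ ⟨t, ht, rfl⟩; exact hT γ t ht)
  exact this ⟨x, hx, rfl⟩

theorem IsInvariantUnder.commutator {N : Subgroup K} (hN : IsInvariantUnder π N) :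
    IsInvariantUnder π (⁅N, N⁆ : Subgroup K) := by
  intro γ x hx
  have hmap : N.map (π γ).toMonoidHom ≤ N := by
    rintro _ ⟨n, hn, rfl⟩
    exact hN γ n hn
  have : ⁅N, N⁆.map (π γ).toMonoidHom ≤ ⁅N, N⁆ := by
    rw [map_commutator]
    exact commutator_mono hmap hmap
  exact this ⟨x, hx, rfl⟩

open scoped IsMulCommutative in
theorem IsInvariantUnder.map_torsion {N : Subgroup K} [IsMulCommutative N]
    (hN : IsInvariantUnder π N) : IsInvariantUnder π ((CommGroup.torsion N).map N.subtype) := by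
  rintro γ _ ⟨x, hx, rfl⟩
  refine ⟨⟨π γ x, hN γ x x.2⟩, ?_, rfl⟩
  exact Submonoid.isOfFinOrder_coe.mp
    ((π γ).toMonoidHom.isOfFinOrder (Submonoid.isOfFinOrder_coe.mpr hx))

theorem finite_range_apply_of_mem_closure {T : Set K} (hT : T.Finite)
    (hinv : IsInvariantUnder π T) {x : K} (hx : x ∈ closure T) :
    (Set.range fun γ => π γ x).Finite := by
  induction hx using closure_induction with
  | mem x hx => exact hT.subset (Set.range_subset_iff.mpr fun γ => hinv γ x hx)
  | one =>
    exact (Set.finite_singleton 1).subset (Set.range_subset_iff.mpr fun γ => map_one (π γ))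
  | mul x y _ _ hx hy =>
    refine (hx.image2 (· * ·) hy).subset (Set.range_subset_iff.mpr fun γ => ?_)
    rw [map_mul]
    exact Set.mem_image2_of_mem ⟨γ, rfl⟩ ⟨γ, rfl⟩
  | inv x _ hx =>
    refine (hx.image (·⁻¹)).subset (Set.range_subset_iff.mpr fun γ => ?_)
    rw [map_inv]
    exact Set.mem_image_of_mem _ ⟨γ, rfl⟩

theorem finite_commutator_closure (hinn : Inn K ≤ π.range) {T : Set K} (hT : T.Finite)
    (hinv : IsInvariantUnder π T) : Finite (⁅closure T, closure T⁆ : Subgroup K) := by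
  have := finiteIndex_center_closure_of_finite hT fun k _ t ht => hinv.conj_mem hinn k ht
  have := finite_commutatorSet_of_finiteIndex_center (G := closure T)
  rw [← map_subtype_commutator]
  exact Finite.of_equiv _ (equivMapOfInjective _ _ (closure T).subtype_injective).toEquiv

open scoped IsMulCommutative in
theorem exists_le_finite_or_free_of_fg {N : Subgroup K} [IsMulCommutative N] [Group.FG N]
    (hN : N ≠ ⊥) (hinv : IsInvariantUnder π N) :
    ∃ M ≤ N, M ≠ ⊥ ∧ IsInvariantUnder π M ∧
      (Finite M ∨ ∃ n : ℕ, Nonempty (M ≃* Multiplicative (Fin n → ℤ))) := by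
  by_cases htf : IsMulTorsionFree N
  · exact ⟨N, le_rfl, hN, hinv, Or.inr CommGroup.exists_mulEquiv_free_of_fg⟩
  refine ⟨(CommGroup.torsion N).map N.subtype, map_subtype_le _, ?_, hinv.map_torsion,
    Or.inl ?_⟩
  · rwa [Ne, map_eq_bot_iff_of_injective _ N.subtype_injective,
      ← CommGroup.isMulTorsionFree_iff_torsion_eq_bot]
  · have := CommGroup.finite_torsion_of_fg (A := N)
    exact Finite.of_equiv _ (equivMapOfInjective _ _ N.subtype_injective).toEquiv

theorem exists_isFiniteOrbitSubgroup (hinn : Inn K ≤ π.range) {T : Set K} (hT : T.Finite)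
    (hinv : IsInvariantUnder π T) (hne : closure T ≠ ⊥) :
    ∃ N, IsFiniteOrbitSubgroup π N := by
  suffices ∃ M ≤ closure T, M ≠ ⊥ ∧ IsInvariantUnder π M ∧
      (Finite M ∨ ∃ n : ℕ, Nonempty (M ≃* Multiplicative (Fin n → ℤ))) by
    obtain ⟨M, hMN, hM, hMinv, hMfin⟩ := this
    exact ⟨M, hM, hMinv.normal hinn, hMinv, hMfin,
      fun x hx => finite_range_apply_of_mem_closure hT hinv (hMN hx)⟩
  by_cases hcomm : ⁅closure T, closure T⁆ = ⊥
  · have : Finite T := hT.to_subtype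
    have := le_centralizer_iff_isMulCommutative.mp (commutator_eq_bot_iff_le_centralizer.mp hcomm)
    exact exists_le_finite_or_free_of_fg hne hinv.closure
  · have := hinv.closure.normal hinn
    exact ⟨_, commutator_le_left _ _, hcomm, hinv.closure.commutator,
      Or.inl (finite_commutator_closure hinn hT hinv)⟩

end Invariant

theorem finite_setOf_isConj_map {G H : Type*} [Group G] [Group H] {f : G →* H}
    (hf : Function.Surjective f) {g : G} (hg : {x | IsConj g x}.Finite) :
    {y | IsConj (f g) y}.Finite := by
  refine (hg.image f).subset fun y hy => ?_
  obtain ⟨c, rfl⟩ := isConj_iff.mp hy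
  obtain ⟨x, rfl⟩ := hf c
  exact ⟨x * g * x⁻¹, isConj_iff.mpr ⟨x, rfl⟩, by simp⟩

section Extension

variable {G : Type*} [Group G] {K : Subgroup G} {π : G →* MulAut K}

theorem inn_le_range (hπ : ∀ (g : G) (k : K), ((π g k : K) : G) = g * (k : G) * g⁻¹) :
    Inn K ≤ π.range := by
  rintro _ ⟨k, rfl⟩
  exact ⟨k, MulEquiv.ext fun x => Subtype.ext (by rw [hπ]; rfl)⟩

theorem subset_one_of_finite_of_conj_mem
    (hπ : ∀ (g : G) (k : K), ((π g k : K) : G) = g * (k : G) * g⁻¹)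
    (hi : ¬ ∃ N, IsFiniteOrbitSubgroup π N) {S : Set G} (hS : S.Finite) (hSK : S ⊆ K)
    (hconj : ∀ g, ∀ s ∈ S, g * s * g⁻¹ ∈ S) : S ⊆ {1} := by
  set T : Set K := (↑) ⁻¹' S
  have hinv : IsInvariantUnder π T := fun g t ht => by
    simpa only [T, Set.mem_preimage, hπ] using hconj g t ht
  have hbot : closure T = ⊥ := by
    by_contra hne
    exact hi (exists_isFiniteOrbitSubgroup (inn_le_range hπ)
      (hS.preimage Subtype.val_injective.injOn) hinv hne)
  intro s hs
  exact congrArg Subtype.val (closure_eq_bot_iff.mp hbot (show ⟨s, hSK hs⟩ ∈ T from hs))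

variable [K.Normal]

theorem eq_one_of_finite_isConj_of_mem
    (hπ : ∀ (g : G) (k : K), ((π g k : K) : G) = g * (k : G) * g⁻¹)
    (hi : ¬ ∃ N, IsFiniteOrbitSubgroup π N) {g : G} (hC : {h | IsConj g h}.Finite)
    (hgK : g ∈ K) : g = 1 := by
  refine subset_one_of_finite_of_conj_mem hπ hi hC (fun h hh => ?_)
    (fun x h hh => hh.trans (isConj_iff.mpr ⟨x, rfl⟩)) (IsConj.refl g)
  obtain ⟨c, rfl⟩ := isConj_iff.mp hh
  exact Normal.conj_mem ‹_› g hgK c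

theorem commutatorElement_eq_one_of_finite_isConj
    (hπ : ∀ (g : G) (k : K), ((π g k : K) : G) = g * (k : G) * g⁻¹)
    (hi : ¬ ∃ N, IsFiniteOrbitSubgroup π N) {g : G} (hC : {h | IsConj g h}.Finite)
    {k : G} (hk : k ∈ K) : ⁅g, k⁆ = 1 := by
  have hCconj : ∀ x h, IsConj g h → IsConj g (x * h * x⁻¹) :=
    fun x h hh => hh.trans (isConj_iff.mpr ⟨x, rfl⟩)
  refine subset_one_of_finite_of_conj_mem hπ hi (S := Set.image2 (⁅·, ·⁆) {h | IsConj g h} K)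
    ?_ ?_ ?_ (Set.mem_image2_of_mem (IsConj.refl g) hk)
  · refine (hC.image2 (· * ·⁻¹) hC).subset ?_
    rintro _ ⟨h, hh, k, -, rfl⟩
    exact ⟨h, hh, k * h * k⁻¹, hCconj k h hh, by group⟩
  · rintro _ ⟨h, -, k, hk, rfl⟩
    exact commutator_le_right ⊤ K (commutator_mem_commutator (mem_top h) hk)
  · rintro x _ ⟨h, hh, k, hk, rfl⟩
    exact ⟨x * h * x⁻¹, hCconj x h hh, x * k * x⁻¹, Normal.conj_mem ‹_› k hk x,
      by group⟩

end Extension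

theorem icc_of_centerless_extension_general {G : Type*} [Group G] [Nontrivial G]
    (K : Subgroup G) [K.Normal]
    (π : G →* MulAut K)
    (hπ : ∀ (g : G) (k : K), ((π g k : K) : G) = g * (k : G) * g⁻¹)
    (θ : G ⧸ K →* Out K)
    (hθ : ∀ g : G, θ (QuotientGroup.mk g) = QuotientGroup.mk (π g))
    (hi : ¬ ∃ N : Subgroup K, N ≠ ⊥ ∧ N.Normal ∧
      (∀ (g : G), ∀ n ∈ N, π g n ∈ N) ∧
      (Finite N ∨ ∃ n : ℕ, Nonempty (N ≃* Multiplicative (Fin n → ℤ))) ∧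
      (∀ n ∈ N, {x : K | ∃ g : G, π g n = x}.Finite))
    (hii : Set.InjOn θ {q : G ⧸ K | {r : G ⧸ K | IsConj q r}.Finite}) :
    IsICC G := by
  refine ⟨inferInstance, fun g hg hC => ?_⟩
  by_cases hgK : g ∈ K
  · exact hg (eq_one_of_finite_isConj_of_mem hπ hi hC hgK)
  have hπg : π g = 1 := MulEquiv.ext fun k => Subtype.ext <| by
    rw [hπ]
    exact mul_inv_eq_one.mp (commutatorElement_eq_one_of_finite_isConj hπ hi hC k.2)
  have hFC : (g : G ⧸ K) ∈ {q : G ⧸ K | {r | IsConj q r}.Finite} :=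
    finite_setOf_isConj_map (QuotientGroup.mk'_surjective K) hC
  have hFC1 : (1 : G ⧸ K) ∈ {q : G ⧸ K | {r | IsConj q r}.Finite} :=
    (Set.finite_singleton 1).subset fun _ => isConj_one_right.mp
  have := hii hFC hFC1 (by rw [← QuotientGroup.mk_one, hθ, hθ, hπg, map_one])
  exact hgK ((QuotientGroup.eq_one_iff g).mp this)

/-- Theorem 2, sufficiency: an extension of a centerless group K is icc provided
(i) K has no nontrivial normal subgroup, finite or ≅ ℤⁿ, preserved by π(G) with only finite
π(G)-orbits, and (ii) the induced map θ : G/K → Out(K) is injective on FC(G/K). -/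
theorem icc_of_centerless_extension {G : Type*} [Group G] [Nontrivial G]
    (K : Subgroup G) [K.Normal] (hZ : Subgroup.center K = ⊥)
    (π : G →* MulAut K)
    (hπ : ∀ (g : G) (k : K), ((π g k : K) : G) = g * (k : G) * g⁻¹)
    (θ : G ⧸ K →* Out K)
    (hθ : ∀ g : G, θ (QuotientGroup.mk g) = QuotientGroup.mk (π g))
    (hi : ¬ ∃ N : Subgroup K, N ≠ ⊥ ∧ N.Normal ∧
      (∀ (g : G), ∀ n ∈ N, π g n ∈ N) ∧
      (Finite N ∨ ∃ n : ℕ, Nonempty (N ≃* Multiplicative (Fin n → ℤ))) ∧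
      (∀ n ∈ N, {x : K | ∃ g : G, π g n = x}.Finite))
    (hii : Set.InjOn θ {q : G ⧸ K | {r : G ⧸ K | IsConj q r}.Finite}) :
    IsICC G :=
  icc_of_centerless_extension_general K π hπ θ hθ hi hii
end

section
/- Let G be an icc group with a normal centerless subgroup K, conjugation homomorphism π : G → Aut(K), and induced θ : G/K → Out(K). Then K contains no nontrivial normal subgroup N, either finite or isomorphic to ℤⁿ, preserved by π(G) and with only finite π(G)-orbits, and θ restricted to FC(G/K) is injective. -/
/-!
In an icc group only `1` has finitely many conjugates. For (i), the `G`-conjugacy class of an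
element of `K` is its `π(G)`-orbit, so no nontrivial element has a finite orbit. For (ii), if `gK`
lies in `FC(G/K) ∩ ker θ` then `π g` is inner, say conjugation by `k ∈ K`, and `g k⁻¹` centralizes
`K`. Since `K` is centerless, `C_G(K) ∩ K = 1`, so the quotient map is injective on the normal
subgroup `C_G(K)`; hence the conjugacy class of `g k⁻¹` embeds into that of `gK` and is finite,
forcing `g k⁻¹ = 1`. Finally `FC(G/K)` is closed under `q r⁻¹`, so `θ q = θ r` puts `q r⁻¹` in
`FC(G/K) ∩ ker θ`.
-/

theorem IsICC.eq_one_of_finite_conjugatesOf {G : Type*} [Group G] (h : IsICC G) {g : G}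
    (hg : (conjugatesOf g).Finite) : g = 1 := by
  by_contra hne
  exact h.2 g hne hg

theorem Set.Finite.conjugatesOf_mul_inv {G : Type*} [Group G] {a b : G}
    (ha : (conjugatesOf a).Finite) (hb : (conjugatesOf b).Finite) :
    (conjugatesOf (a * b⁻¹)).Finite := by
  refine (ha.image2 (fun x y => x * y⁻¹) hb).subset ?_
  intro x hx
  obtain ⟨c, rfl⟩ := isConj_iff.mp hx
  exact ⟨c * a * c⁻¹, isConj_iff.mpr ⟨c, rfl⟩, c * b * c⁻¹, isConj_iff.mpr ⟨c, rfl⟩, by group⟩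

namespace Subgroup

variable {G : Type*} [Group G] {K : Subgroup G}

theorem conjugatesOf_coe_subset_image_orbit (π : G →* MulAut K)
    (hπ : ∀ (g : G) (k : K), ((π g k : K) : G) = g * (k : G) * g⁻¹) (k : K) :
    conjugatesOf (k : G) ⊆ (↑) '' {x : K | ∃ g : G, π g k = x} := by
  intro x hx
  obtain ⟨c, rfl⟩ := isConj_iff.mp hx
  exact ⟨π c k, ⟨c, rfl⟩, hπ c k⟩

theorem injOn_mk_centralizer (hZ : center K = ⊥) :
    Set.InjOn (QuotientGroup.mk : G → G ⧸ K) (centralizer (K : Set G)) := by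
  intro x hx y hy hxy
  have hK : x⁻¹ * y ∈ K := QuotientGroup.eq.mp hxy
  have hcent : (⟨x⁻¹ * y, hK⟩ : K) ∈ center K := by
    rw [mem_center_iff]
    intro m
    exact Subtype.ext ((mul_mem (inv_mem hx) hy) m m.2)
  rw [hZ, mem_bot] at hcent
  exact inv_mul_eq_one.mp (congrArg Subtype.val hcent)

theorem finite_conjugatesOf_of_mem_centralizer [K.Normal] (hZ : center K = ⊥) {g : G}
    (hg : g ∈ centralizer (K : Set G))
    (hfin : (conjugatesOf (QuotientGroup.mk g : G ⧸ K)).Finite) :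
    (conjugatesOf g).Finite := by
  have hsub : conjugatesOf g ⊆ centralizer (K : Set G) := by
    intro x hx
    obtain ⟨c, rfl⟩ := isConj_iff.mp hx
    exact (normal_centralizer (H := K)).conj_mem g hg c
  refine Set.Finite.of_finite_image (hfin.subset ?_) ((injOn_mk_centralizer hZ).mono hsub)
  rintro _ ⟨h, hh, rfl⟩
  exact (QuotientGroup.mk' K).map_isConj hh

theorem exists_mem_centralizer_of_mem_inn (π : G →* MulAut K)
    (hπ : ∀ (g : G) (k : K), ((π g k : K) : G) = g * (k : G) * g⁻¹) {g : G}
    (hg : π g ∈ Inn K) :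
    ∃ g' ∈ centralizer (K : Set G), (QuotientGroup.mk g' : G ⧸ K) = QuotientGroup.mk g := by
  obtain ⟨k, hk⟩ := hg
  refine ⟨g * (k : G)⁻¹, ?_, QuotientGroup.eq.mpr (by simp)⟩
  rw [mem_centralizer_iff]
  intro m hm
  have hconj := hπ g ⟨(k : G)⁻¹ * m * k, K.mul_mem (K.mul_mem (K.inv_mem k.2) hm) k.2⟩
  rw [← hk] at hconj
  simp only [MulAut.conj_apply, coe_mul, coe_inv] at hconj
  calc m * (g * (k : G)⁻¹) = (g * ((k : G)⁻¹ * m * k) * g⁻¹) * (g * (k : G)⁻¹) := by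
        rw [← hconj]; group
    _ = g * (k : G)⁻¹ * m := by group

end Subgroup

theorem IsICC.eq_one_of_finite_orbit {G : Type*} [Group G] (h : IsICC G) {K : Subgroup G}
    (π : G →* MulAut K) (hπ : ∀ (g : G) (k : K), ((π g k : K) : G) = g * (k : G) * g⁻¹)
    (k : K) (hk : {x : K | ∃ g : G, π g k = x}.Finite) : k = 1 :=
  Subtype.ext <| h.eq_one_of_finite_conjugatesOf <|
    (hk.image _).subset (Subgroup.conjugatesOf_coe_subset_image_orbit π hπ k)

/-- Theorem 2, necessity: if an extension of a centerless group K is icc then (i) K has no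
nontrivial normal subgroup, finite or ≅ ℤⁿ, preserved by π(G) with only finite π(G)-orbits,
and (ii) θ : G/K → Out(K) is injective on FC(G/K). -/
theorem centerless_extension_of_icc {G : Type*} [Group G]
    (K : Subgroup G) [K.Normal] (hZ : Subgroup.center K = ⊥)
    (π : G →* MulAut K)
    (hπ : ∀ (g : G) (k : K), ((π g k : K) : G) = g * (k : G) * g⁻¹)
    (θ : G ⧸ K →* Out K)
    (hθ : ∀ g : G, θ (QuotientGroup.mk g) = QuotientGroup.mk (π g))
    (hicc : IsICC G) :
    (¬ ∃ N : Subgroup K, N ≠ ⊥ ∧ N.Normal ∧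
      (∀ (g : G), ∀ n ∈ N, π g n ∈ N) ∧
      (Finite N ∨ ∃ n : ℕ, Nonempty (N ≃* Multiplicative (Fin n → ℤ))) ∧
      (∀ n ∈ N, {x : K | ∃ g : G, π g n = x}.Finite)) ∧
    Set.InjOn θ {q : G ⧸ K | {r : G ⧸ K | IsConj q r}.Finite} := by
  refine ⟨fun ⟨N, hN, _, _, _, horbit⟩ => hN <| (Subgroup.eq_bot_iff_forall N).mpr
    fun n hn => hicc.eq_one_of_finite_orbit π hπ n (horbit n hn), ?_⟩
  have ker_inf_fc : ∀ s : G ⧸ K, (conjugatesOf s).Finite → θ s = 1 → s = 1 := by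
    intro s hfin hs
    obtain ⟨g, rfl⟩ := QuotientGroup.mk_surjective s
    have hinn : π g ∈ Inn K := (QuotientGroup.eq_one_iff _).mp (by rw [← hθ]; exact hs)
    obtain ⟨g', hg', hmk⟩ := Subgroup.exists_mem_centralizer_of_mem_inn π hπ hinn
    have hfin' := Subgroup.finite_conjugatesOf_of_mem_centralizer hZ hg' (hmk ▸ hfin)
    rw [← hmk, hicc.eq_one_of_finite_conjugatesOf hfin']
    rfl
  intro q hq r hr hqr
  refine mul_inv_eq_one.mp (ker_inf_fc _ (Set.Finite.conjugatesOf_mul_inv hq hr) ?_)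
  rw [map_mul, map_inv, hqr, mul_inv_cancel]
end

section
/- Let K be a centerless normal subgroup of G with quotient ρ : G → Q and induced homomorphism θ : Q → Out(K). If there exists q ≠ 1 in FC(Q) with θ(q) = 1, then G is not icc. More precisely, there is a lift q̄ of q in G centralizing K whose centralizer in G contains ρ⁻¹(Z_Q(q)) and hence has finite index in G. -/
/-! Since `θ q = 1`, conjugation by a lift `g` of `q` agrees on `K` with conjugation by some
`k ∈ K`, so `q̄ = g k⁻¹` centralizes `K`. If `g'` commutes with `q` modulo `K`, then `g' q̄ g'⁻¹`
also centralizes `K` and differs from `q̄` by an element of `K`, which is then central in `K`,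
hence trivial. So the centralizer of `q̄` contains the preimage of `Z_Q(q)`, which has finite index
because `q` has finitely many conjugates; thus `q̄ ≠ 1` has a finite conjugacy class. -/

namespace Subgroup

theorem index_centralizer_singleton {G : Type*} [Group G] (g : G) :
    (centralizer {g}).index = {h | IsConj g h}.ncard := by
  rw [centralizer_eq_comap_stabilizer]
  refine (index_comap_of_surjective (f := ConjAct.toConjAct.toMonoidHom) _
    ConjAct.toConjAct.surjective).trans ((MulAction.index_stabilizer (ConjAct G) g).trans ?_)
  congr 1
  ext h
  exact ConjAct.mem_orbit_conjAct.trans isConj_comm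

theorem finite_setOf_isConj_iff_finiteIndex_centralizer {G : Type*} [Group G] (g : G) :
    {h | IsConj g h}.Finite ↔ (centralizer {g}).FiniteIndex := by
  rw [finiteIndex_iff, index_centralizer_singleton]
  exact ⟨fun hfin => Set.ncard_ne_zero_of_mem (IsConj.refl g) hfin, Set.finite_of_ncard_ne_zero⟩

theorem finiteIndex_comap_of_surjective {G H : Type*} [Group G] [Group H]
    {f : G →* H} (hf : Function.Surjective f) (L : Subgroup H) [L.FiniteIndex] :
    (L.comap f).FiniteIndex :=
  ⟨by rw [index_comap_of_surjective L hf]; exact FiniteIndex.index_ne_zero⟩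

section CenterlessNormal

variable {G : Type*} [Group G] {K : Subgroup G}

theorem mul_inv_mem_centralizer_of_conj_eq {g k : G} (hk : k ∈ K)
    (hconj : ∀ x ∈ K, g * x * g⁻¹ = k * x * k⁻¹) : g * k⁻¹ ∈ centralizer K := by
  rw [mem_centralizer_iff]
  intro x hx
  have hx' := hconj (k⁻¹ * x * k) (K.mul_mem (K.mul_mem (K.inv_mem hk) hx) hk)
  rw [show k * (k⁻¹ * x * k) * k⁻¹ = x by group] at hx'
  calc x * (g * k⁻¹) = g * (k⁻¹ * x * k) * g⁻¹ * (g * k⁻¹) := by rw [hx']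
    _ = g * k⁻¹ * x := by group

theorem eq_of_mem_centralizer_of_mul_inv_mem (hZ : center K = ⊥) {a b : G}
    (ha : a ∈ centralizer K) (hb : b ∈ centralizer K) (hab : a * b⁻¹ ∈ K) : a = b := by
  have hcenter : (⟨a * b⁻¹, hab⟩ : K) ∈ center K := by
    rw [mem_center_iff]
    intro x
    exact Subtype.ext (mem_centralizer_iff.1 (mul_mem ha (inv_mem hb)) x x.2)
  rw [hZ, mem_bot, Subtype.ext_iff] at hcenter
  exact mul_inv_eq_one.1 hcenter

theorem comap_centralizer_mk_le_centralizer [K.Normal] (hZ : center K = ⊥) {a : G}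
    (ha : a ∈ centralizer K) :
    comap (QuotientGroup.mk' K) (centralizer {(a : G ⧸ K)}) ≤ centralizer {a} := by
  intro g hg
  rw [mem_comap, mem_centralizer_singleton_iff, QuotientGroup.mk'_apply] at hg
  rw [mem_centralizer_singleton_iff, ← mul_inv_eq_iff_eq_mul]
  refine eq_of_mem_centralizer_of_mul_inv_mem hZ (normal_centralizer.conj_mem a ha g) ha ?_
  rw [← QuotientGroup.eq_one_iff]
  simp only [QuotientGroup.mk_mul, QuotientGroup.mk_inv, hg]
  group

end CenterlessNormal

end Subgroup

theorem not_isICC_of_finite_setOf_isConj {G : Type*} [Group G] {g : G} (hg : g ≠ 1)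
    (hfin : {h | IsConj g h}.Finite) : ¬ IsICC G :=
  fun hicc => hicc.2 g hg hfin

/-- If q ≠ 1 in FC(Q) has θ(q) = 1 (with K centerless normal in G), then G is not icc:
there is a lift q̄ of q centralizing K whose centralizer contains ρ⁻¹(Z_Q(q)),
hence has finite index in G. -/
theorem not_icc_of_ker_theta_on_FC {G : Type*} [Group G]
    (K : Subgroup G) [K.Normal] (hZ : Subgroup.center K = ⊥)
    (π : G →* MulAut K)
    (hπ : ∀ (g : G) (k : K), ((π g k : K) : G) = g * (k : G) * g⁻¹)
    (θ : G ⧸ K →* Out K)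
    (hθ : ∀ g : G, θ (QuotientGroup.mk g) = QuotientGroup.mk (π g))
    (q : G ⧸ K) (hq : q ≠ 1)
    (hqFC : {r : G ⧸ K | IsConj q r}.Finite)
    (hker : θ q = 1) :
    (¬ IsICC G) ∧
    ∃ qbar : G, (QuotientGroup.mk qbar : G ⧸ K) = q ∧
      (∀ k ∈ K, Commute qbar k) ∧
      Subgroup.comap (QuotientGroup.mk' K) (Subgroup.centralizer {q}) ≤
        Subgroup.centralizer {qbar} ∧
      (Subgroup.centralizer {qbar}).FiniteIndex := by
  obtain ⟨g, rfl⟩ := QuotientGroup.mk_surjective q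
  obtain ⟨k, hk⟩ : π g ∈ Inn K := (QuotientGroup.eq_one_iff (π g)).1 (by rwa [hθ] at hker)
  have hconj : ∀ x ∈ K, g * x * g⁻¹ = k * x * (k : G)⁻¹ := fun x hx => by
    simpa [← hk, MulAut.conj_apply] using (hπ g ⟨x, hx⟩).symm
  have hcent : g * (k : G)⁻¹ ∈ Subgroup.centralizer K :=
    Subgroup.mul_inv_mem_centralizer_of_conj_eq k.2 hconj
  have hlift : ((g * (k : G)⁻¹ : G) : G ⧸ K) = g := by simp
  have hle := Subgroup.comap_centralizer_mk_le_centralizer hZ hcent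
  rw [hlift] at hle
  have hfin : (Subgroup.centralizer {g * (k : G)⁻¹}).FiniteIndex := by
    have := (Subgroup.finite_setOf_isConj_iff_finiteIndex_centralizer _).1 hqFC
    have := Subgroup.finiteIndex_comap_of_surjective (QuotientGroup.mk'_surjective K)
      (Subgroup.centralizer {(g : G ⧸ K)})
    exact Subgroup.finiteIndex_of_le hle
  have hne : g * (k : G)⁻¹ ≠ 1 := fun h => hq (by rw [← hlift, h, QuotientGroup.mk_one])
  refine ⟨not_isICC_of_finite_setOf_isConj hne
    ((Subgroup.finite_setOf_isConj_iff_finiteIndex_centralizer _).2 hfin), _, hlift,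
    fun x hx => (Subgroup.mem_centralizer_iff.1 hcent x hx).symm, hle, hfin⟩
end

section
/- Let G be a group defined by an extension 1 → K → G → Q → 1 with K icc, and let θ : Q → Out(K) be the associated homomorphism. Then G is icc if and only if the restriction of θ to FC(Q) is injective. -/
lemma central_eq_one {K : Type*} [Group K] (hK : IsICC K) {z : K}
    (hz : ∀ x : K, z * x = x * z) : z = 1 := by
  by_contra h
  refine hK.2 z h ?_
  refine (Set.finite_singleton z).subset ?_
  rintro x hx
  obtain ⟨c, rfl⟩ := isConj_iff.mp hx
  simp [← hz c]

lemma aut_perturb {K : Type*} [Group K] (hK : IsICC K) (α : MulAut K)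
    (hfin : (Set.range fun k : K => k * (α k)⁻¹).Finite) : α = 1 := by
  have key : ∀ a : K, a * (α a)⁻¹ = 1 := by
    intro a
    by_contra hne
    refine hK.2 _ hne ?_
    refine ((hfin.prod hfin).image fun p => p.1 * p.2⁻¹).subset ?_
    rintro x hx
    obtain ⟨c, rfl⟩ := isConj_iff.mp hx
    refine ⟨(c * a * (α (c * a))⁻¹, c * (α c)⁻¹), ⟨⟨c * a, rfl⟩, ⟨c, rfl⟩⟩, ?_⟩
    simp only [map_mul, mul_inv_rev]
    group
  refine MulEquiv.ext fun a => ?_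
  have := key a
  rw [mul_inv_eq_one] at this
  exact this.symm

lemma class_mul_finite {α : Type*} [Group α] {a b : α}
    (ha : {x | IsConj a x}.Finite) (hb : {x | IsConj b x}.Finite) :
    {x | IsConj (a * b) x}.Finite := by
  refine ((ha.prod hb).image fun p => p.1 * p.2).subset ?_
  rintro x hx
  obtain ⟨c, rfl⟩ := isConj_iff.mp hx
  refine ⟨(c * a * c⁻¹, c * b * c⁻¹), ⟨isConj_iff.mpr ⟨c, rfl⟩, isConj_iff.mpr ⟨c, rfl⟩⟩, by group⟩

lemma class_inv_finite {α : Type*} [Group α] {a : α}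
    (ha : {x | IsConj a x}.Finite) : {x | IsConj a⁻¹ x}.Finite := by
  refine (ha.image Inv.inv).subset ?_
  rintro x hx
  obtain ⟨c, rfl⟩ := isConj_iff.mp hx
  exact ⟨c * a * c⁻¹, isConj_iff.mpr ⟨c, rfl⟩, by group⟩


/-- For an extension 1 → K → G → Q → 1 with K icc, G is icc iff
θ : Q → Out(K) is injective on FC(Q). -/
theorem icc_extension_iff {G : Type*} [Group G]
    (K : Subgroup G) [K.Normal] (hK : IsICC K)
    (π : G →* MulAut K)
    (hπ : ∀ (g : G) (k : K), ((π g k : K) : G) = g * (k : G) * g⁻¹)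
    (θ : G ⧸ K →* Out K)
    (hθ : ∀ g : G, θ (QuotientGroup.mk g) = QuotientGroup.mk (π g)) :
    IsICC G ↔ Set.InjOn θ {q : G ⧸ K | {r : G ⧸ K | IsConj q r}.Finite} := by
  -- π restricted to K is conjugation
  have hpiK : ∀ k : K, π (k : G) = MulAut.conj k := by
    intro k
    refine MulEquiv.ext fun m => Subtype.ext ?_
    rw [hπ]
    simp [MulAut.conj_apply]
  constructor
  · rintro ⟨_, hicc⟩
    have key : ∀ q : G ⧸ K, {r : G ⧸ K | IsConj q r}.Finite → θ q = 1 → q = 1 := by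
      intro q hfc hq1
      obtain ⟨g, rfl⟩ := QuotientGroup.mk_surjective q
      rw [hθ] at hq1
      obtain ⟨k, hk⟩ : π g ∈ Inn K := (QuotientGroup.eq_one_iff _).mp hq1
      set g' : G := (k : G)⁻¹ * g with hg'
      have hmk : (QuotientGroup.mk g' : G ⧸ K) = QuotientGroup.mk g := by
        rw [QuotientGroup.eq]
        have : g⁻¹ * (k : G) * g⁻¹⁻¹ ∈ K := Subgroup.Normal.conj_mem ‹K.Normal› _ k.2 g⁻¹
        simpa [hg', mul_assoc] using this
      have hpig' : π g' = 1 := by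
        rw [hg', map_mul, map_inv, hpiK, hk]
        simp
      by_contra hq
      have hg'K : g' ∉ K := by
        intro hmem
        exact hq (hmk ▸ (QuotientGroup.eq_one_iff g').mpr hmem)
      have hg'1 : g' ≠ 1 := fun h => hg'K (h ▸ K.one_mem)
      refine hicc g' hg'1 ?_
      -- the class of g' injects into the class of q via mk
      have him : QuotientGroup.mk '' {h : G | IsConj g' h} ⊆ {r : G ⧸ K | IsConj (QuotientGroup.mk g) r} := by
        rintro _ ⟨x, hx, rfl⟩
        obtain ⟨c, rfl⟩ := isConj_iff.mp hx
        refine isConj_iff.mpr ⟨QuotientGroup.mk c, ?_⟩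
        rw [← hmk]
        rfl
      have hinjOn : Set.InjOn (QuotientGroup.mk : G → G ⧸ K) {h : G | IsConj g' h} := by
        rintro w₁ hw₁ w₂ hw₂ hmkeq
        have hπw : ∀ w ∈ {h : G | IsConj g' h}, π w = 1 := by
          rintro w hw
          obtain ⟨c, rfl⟩ := isConj_iff.mp hw
          rw [map_mul, map_mul, hpig', map_inv]
          simp
        have hmem : w₁⁻¹ * w₂ ∈ K := QuotientGroup.eq.mp hmkeq
        have hcentral : ∀ x : K, (⟨w₁⁻¹ * w₂, hmem⟩ : K) * x = x * ⟨w₁⁻¹ * w₂, hmem⟩ := by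
          intro x
          have h1 : π (⟨w₁⁻¹ * w₂, hmem⟩ : K) = 1 := by
            show π (w₁⁻¹ * w₂) = 1
            rw [map_mul, map_inv, hπw w₁ hw₁, hπw w₂ hw₂]
            simp
          have h2 := hpiK ⟨w₁⁻¹ * w₂, hmem⟩
          rw [h1] at h2
          have h3 : MulAut.conj (⟨w₁⁻¹ * w₂, hmem⟩ : K) x = x := by rw [← h2]; rfl
          have h4 : (⟨w₁⁻¹ * w₂, hmem⟩ : K) * x * (⟨w₁⁻¹ * w₂, hmem⟩ : K)⁻¹ = x := h3
          rw [mul_inv_eq_iff_eq_mul] at h4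
          exact h4
        have := central_eq_one hK hcentral
        have : w₁⁻¹ * w₂ = 1 := Subtype.ext_iff.mp this
        rw [← inv_mul_eq_one]
        simpa using this
      exact Set.Finite.of_finite_image (hfc.subset him) hinjOn
    rintro q₁ hq₁ q₂ hq₂ hθeq
    have h1 : θ (q₁ * q₂⁻¹) = 1 := by
      rw [map_mul, map_inv, hθeq]
      simp
    have h2 : {r : G ⧸ K | IsConj (q₁ * q₂⁻¹) r}.Finite :=
      class_mul_finite hq₁ (class_inv_finite hq₂)
    have := key _ h2 h1
    rwa [mul_inv_eq_one] at this
  · intro hinj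
    constructor
    · haveI := hK.1
      obtain ⟨k, hk⟩ := exists_ne (1 : K)
      refine ⟨(k : G), 1, ?_⟩
      simpa using hk
    · intro g hg
      by_contra hinf
      rw [Set.not_infinite] at hinf
      apply hg
      -- π g = 1
      have hfinr : (Set.range fun k : K => k * ((π g) k)⁻¹).Finite := by
        have himg : (Subtype.val '' Set.range fun k : K => k * ((π g) k)⁻¹) ⊆
            (fun h => h * g⁻¹) '' {h : G | IsConj g h} := by
          rintro _ ⟨_, ⟨k, rfl⟩, rfl⟩
          refine ⟨(k : G) * g * (k : G)⁻¹, isConj_iff.mpr ⟨(k : G), rfl⟩, ?_⟩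
          show (k : G) * g * (k : G)⁻¹ * g⁻¹ = _
          push_cast
          rw [hπ]
          group
        exact Set.Finite.of_finite_image (((hinf.image _)).subset himg) Subtype.val_injective.injOn
      have hpig : π g = 1 := aut_perturb hK (π g) hfinr
      -- mk g has finite conjugacy class in the quotient
      have hfcq : {r : G ⧸ K | IsConj (QuotientGroup.mk g : G ⧸ K) r}.Finite := by
        refine (hinf.image QuotientGroup.mk).subset ?_
        rintro r hr
        obtain ⟨c, rfl⟩ := isConj_iff.mp hr
        obtain ⟨x, rfl⟩ := QuotientGroup.mk_surjective c
        exact ⟨x * g * x⁻¹, isConj_iff.mpr ⟨x, rfl⟩, rfl⟩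
      have h1fc : {r : G ⧸ K | IsConj (1 : G ⧸ K) r}.Finite := by
        refine (Set.finite_singleton 1).subset ?_
        rintro r hr
        obtain ⟨c, rfl⟩ := isConj_iff.mp hr
        simp
      have hθg : θ (QuotientGroup.mk g) = θ 1 := by
        rw [hθ, hpig, map_one]
        rfl
      have hmk1 : (QuotientGroup.mk g : G ⧸ K) = 1 := hinj hfcq h1fc hθg
      have hgK : g ∈ K := (QuotientGroup.eq_one_iff g).mp hmk1
      have hone : (⟨g, hgK⟩ : K) = 1 := by
        apply central_eq_one hK
        intro x
        apply Subtype.ext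
        have h5 := hπ g x
        rw [hpig] at h5
        have h6 : g * (x : G) * g⁻¹ = (x : G) := by simpa using h5.symm
        show g * (x : G) = (x : G) * g
        exact mul_inv_eq_iff_eq_mul.mp h6
      exact Subtype.ext_iff.mp hone
end

section
/- A nonelementary word hyperbolic group K is icc if and only if FC(K) = 1; moreover FC(K) is a finite characteristic subgroup of K. -/
/-- Word length of x with respect to a generating set S (letters from S ∪ S⁻¹). -/
noncomputable def wordLength {K : Type*} [Group K] (S : Set K) (x : K) : ℕ :=
  sInf {n : ℕ | ∃ l : List K, (∀ a ∈ l, a ∈ S ∨ a⁻¹ ∈ S) ∧ l.length = n ∧ l.prod = x}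

/-- Word metric on K with respect to S. -/
noncomputable def wordDist {K : Type*} [Group K] (S : Set K) (x y : K) : ℕ :=
  wordLength S (x⁻¹ * y)

/-- Gromov product (x|y)_w with respect to the word metric. -/
noncomputable def gromovProd {K : Type*} [Group K] (S : Set K) (w x y : K) : ℝ :=
  ((wordDist S w x : ℝ) + (wordDist S w y : ℝ) - (wordDist S x y : ℝ)) / 2

/-- A group is word hyperbolic if it admits a finite generating set whose word metric
satisfies Gromov's four-point hyperbolicity condition for some δ. -/
def IsWordHyperbolic (K : Type*) [Group K] : Prop :=
  ∃ S : Finset K, Subgroup.closure (S : Set K) = ⊤ ∧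
    ∃ δ : ℝ, ∀ w x y z : K,
      min (gromovProd (S : Set K) w x z) (gromovProd (S : Set K) w z y) - δ ≤
        gromovProd (S : Set K) w x y

/-- A group is elementary if it is virtually cyclic. -/
def IsElementary (K : Type*) [Group K] : Prop :=
  ∃ H : Subgroup K, H.FiniteIndex ∧ IsCyclic H

/-!
Every element of FC(K) has a centralizer of finite index. For an element `a` of infinite order
this makes `K` virtually cyclic: elements of the centralizer displace the powers of `a` by a
bounded amount, so by the four-point condition a large power `c = aⁿ` is almost a geodesic axis
(`|c^(2k)| ≈ 2 |c^k|`), and everything commuting with `c` stays near `⟨c⟩`. Hence FC(K) is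
torsion. A torsion element cannot have only long conjugates either, since for a shortest conjugate
`u` the same estimate `|u²| ≳ 2 |u| - O(δ)` makes the conjugacy length of `g^(2^i)` grow without
bound. So FC(K) is covered by the finitely many finite conjugacy classes meeting a fixed ball.
-/

namespace WordHyperbolic

variable {K : Type*} [Group K] {S : Set K} {δ : ℝ}

def IsWord (S : Set K) (l : List K) : Prop := ∀ a ∈ l, a ∈ S ∨ a⁻¹ ∈ S

lemma IsWord.append {l₁ l₂ : List K} (h₁ : IsWord S l₁) (h₂ : IsWord S l₂) :
    IsWord S (l₁ ++ l₂) := by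
  intro a ha
  rcases List.mem_append.1 ha with ha | ha
  exacts [h₁ a ha, h₂ a ha]

lemma IsWord.sublist {l₁ l₂ : List K} (h : IsWord S l₂) (hl : l₁.Sublist l₂) : IsWord S l₁ :=
  fun a ha => h a (hl.subset ha)

lemma IsWord.inv_reverse {l : List K} (h : IsWord S l) : IsWord S (l.map (·⁻¹)).reverse := by
  intro a ha
  obtain ⟨b, hb, rfl⟩ := List.mem_map.1 (List.mem_reverse.1 ha)
  simpa [or_comm] using h b hb

lemma exists_isWord_prod_eq (hS : Subgroup.closure S = ⊤) (x : K) :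
    ∃ l, IsWord S l ∧ l.prod = x := by
  have hx : x ∈ (Subgroup.closure S).toSubmonoid := by simp [hS]
  rw [Subgroup.closure_toSubmonoid] at hx
  obtain ⟨l, hl, rfl⟩ := Submonoid.exists_list_of_mem_closure hx
  exact ⟨l, fun a ha => by simpa using hl a ha, rfl⟩

lemma wordLength_le_length {l : List K} (h : IsWord S l) : wordLength S l.prod ≤ l.length :=
  Nat.sInf_le ⟨l, h, rfl, rfl⟩

lemma exists_isWord_length_eq_wordLength (hS : Subgroup.closure S = ⊤) (x : K) :
    ∃ l, IsWord S l ∧ l.length = wordLength S x ∧ l.prod = x := by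
  obtain ⟨l, hl, rfl⟩ := exists_isWord_prod_eq hS x
  exact Nat.sInf_mem (s := {n | ∃ l', IsWord S l' ∧ l'.length = n ∧ l'.prod = l.prod})
    ⟨l.length, l, hl, rfl, rfl⟩

@[simp] lemma wordLength_one : wordLength S (1 : K) = 0 :=
  Nat.le_zero.1 (wordLength_le_length (l := []) (by simp [IsWord]))

@[simp] lemma wordLength_inv (x : K) : wordLength S x⁻¹ = wordLength S x := by
  suffices h : ∀ y : K, {n | ∃ l : List K, IsWord S l ∧ l.length = n ∧ l.prod = y} ⊆
      {n | ∃ l : List K, IsWord S l ∧ l.length = n ∧ l.prod = y⁻¹} by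
    exact congrArg sInf (((h x).antisymm (by simpa using h x⁻¹)).symm)
  rintro y _ ⟨l, hl, rfl, rfl⟩
  exact ⟨_, hl.inv_reverse, by simp, (List.prod_inv_reverse l).symm⟩

lemma wordLength_mul_le (hS : Subgroup.closure S = ⊤) (x y : K) :
    wordLength S (x * y) ≤ wordLength S x + wordLength S y := by
  obtain ⟨l₁, h₁, e₁, rfl⟩ := exists_isWord_length_eq_wordLength hS x
  obtain ⟨l₂, h₂, e₂, rfl⟩ := exists_isWord_length_eq_wordLength hS y
  simpa [e₁, e₂] using wordLength_le_length (h₁.append h₂)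

lemma exists_wordLength_eq_add_wordLength_inv_mul (hS : Subgroup.closure S = ⊤) {x : K} {t : ℕ}
    (ht : t ≤ wordLength S x) :
    ∃ p, wordLength S p = t ∧ t + wordLength S (p⁻¹ * x) = wordLength S x := by
  obtain ⟨l, hl, hlen, rfl⟩ := exists_isWord_length_eq_wordLength hS x
  refine ⟨(l.take t).prod, ?_⟩
  have hdrop : (l.take t).prod⁻¹ * l.prod = (l.drop t).prod := by
    rw [← List.prod_take_mul_prod_drop l t, inv_mul_cancel_left]
  have h₁ := wordLength_le_length (hl.sublist (l.take_sublist t))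
  have h₂ := wordLength_le_length (hl.sublist (l.drop_sublist t))
  have h₃ := wordLength_mul_le hS (l.take t).prod (l.drop t).prod
  rw [List.prod_take_mul_prod_drop] at h₃
  simp only [List.length_take, List.length_drop] at h₁ h₂
  rw [hdrop]
  omega

lemma finite_setOf_wordLength_le (hS : Subgroup.closure S = ⊤) (hfin : S.Finite) (R : ℕ) :
    {x : K | wordLength S x ≤ R}.Finite := by
  have hwords : {l : List K | IsWord S l ∧ l.length ≤ R}.Finite := by
    have : Finite ↥(S ∪ S⁻¹) := (hfin.union hfin.inv).to_subtype
    refine ((List.finite_length_le ↥(S ∪ S⁻¹) R).image (List.map Subtype.val)).subset ?_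
    rintro l ⟨hl, hlen⟩
    lift l to List ↥(S ∪ S⁻¹) using hl
    exact ⟨l, by simpa using hlen, rfl⟩
  refine (hwords.image List.prod).subset ?_
  intro x hx
  obtain ⟨l, hl, hlen, rfl⟩ := exists_isWord_length_eq_wordLength hS x
  exact ⟨l, ⟨hl, hlen ▸ hx⟩, rfl⟩

lemma exists_wordDist_le_of_finiteIndex (H : Subgroup K) [H.FiniteIndex] :
    ∃ D, ∀ w : K, ∃ p ∈ H, wordDist S p w ≤ D := by
  have : Finite (K ⧸ H) := H.finite_quotient_of_finiteIndex
  obtain ⟨D, hD⟩ := (Set.finite_range fun q : K ⧸ H => wordLength S q.out).bddAbove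
  refine ⟨D, fun w => ⟨w * ((w⁻¹ : K) : K ⧸ H).out, ?_, ?_⟩⟩
  · have h := QuotientGroup.eq.1 (QuotientGroup.out_eq' ((w⁻¹ : K) : K ⧸ H))
    simpa using H.inv_mem h
  · simpa [wordDist] using hD ⟨((w⁻¹ : K) : K ⧸ H), rfl⟩

lemma finiteIndex_of_forall_exists_wordDist_le (hS : Subgroup.closure S = ⊤) (hfin : S.Finite)
    {H : Subgroup K} {R : ℕ} (h : ∀ w : K, ∃ p ∈ H, wordDist S p w ≤ R) : H.FiniteIndex := by
  have : Finite {x : K // wordLength S x ≤ R} := (finite_setOf_wordLength_le hS hfin R).to_subtype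
  have : Finite (K ⧸ H) := by
    refine Finite.of_surjective (fun x : {x : K // wordLength S x ≤ R} => (x.1 : K ⧸ H)) ?_
    intro q
    induction q using QuotientGroup.induction_on with | H v => ?_
    obtain ⟨p, hp, hpv⟩ := h v⁻¹
    refine ⟨⟨v * p, by rwa [← wordLength_inv, mul_inv_rev]⟩, QuotientGroup.eq.2 ?_⟩
    simpa using hp
  exact Subgroup.finiteIndex_of_finite_quotient

lemma isElementary_of_finite (K : Type*) [Group K] [Finite K] : IsElementary K :=
  ⟨⊥, inferInstance, inferInstance⟩

variable (K) in
def fcSubgroup : Subgroup K where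
  carrier := {g | (conjugatesOf g).Finite}
  one_mem' := by
    refine (Set.finite_singleton 1).subset fun h hh => ?_
    obtain ⟨c, rfl⟩ := isConj_iff.1 hh
    simp
  mul_mem' {g₁ g₂} h₁ h₂ := by
    refine (h₁.image2 (· * ·) h₂).subset fun h hh => ?_
    obtain ⟨c, rfl⟩ := isConj_iff.1 hh
    exact ⟨c * g₁ * c⁻¹, isConj_iff.2 ⟨c, rfl⟩, c * g₂ * c⁻¹, isConj_iff.2 ⟨c, rfl⟩, by group⟩
  inv_mem' {g} h := by
    refine (h.image (·⁻¹)).subset fun h hh => ⟨h⁻¹, ?_, inv_inv h⟩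
    obtain ⟨c, rfl⟩ := isConj_iff.1 hh
    exact isConj_iff.2 ⟨c, by group⟩

lemma mem_fcSubgroup {g : K} : g ∈ fcSubgroup K ↔ (conjugatesOf g).Finite := Iff.rfl

instance fcSubgroup.characteristic : (fcSubgroup K).Characteristic := by
  refine Subgroup.characteristic_iff_comap_le.2 fun φ g hg => ?_
  refine (Set.Finite.image φ.symm hg).subset fun h hh => ⟨φ h, ?_, by simp⟩
  exact φ.toMonoidHom.map_isConj hh

lemma isICC_iff_fcSubgroup_eq : IsICC K ↔ Nontrivial K ∧ (fcSubgroup K : Set K) = {1} := by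
  refine and_congr_right fun _ => ⟨fun h => ?_, fun h g hg hfin => ?_⟩
  · refine Set.eq_singleton_iff_unique_mem.2 ⟨(fcSubgroup K).one_mem, fun g hg => ?_⟩
    by_contra hg1
    exact h g hg1 hg
  · exact hg (Set.mem_singleton_iff.1 (h ▸ hfin : g ∈ ({1} : Set K)))

lemma finiteIndex_centralizer_of_mem_fcSubgroup {g : K} (hg : g ∈ fcSubgroup K) :
    (Subgroup.centralizer {g}).FiniteIndex := by
  rw [Subgroup.centralizer_eq_comap_stabilizer]
  have hfin : (MulAction.orbit (ConjAct K) g).Finite :=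
    hg.subset fun h hh => (ConjAct.mem_orbit_conjAct.1 hh).symm
  refine ⟨ne_of_eq_of_ne ((Subgroup.index_comap_of_surjective _
    ConjAct.toConjAct.surjective).trans (MulAction.index_stabilizer _ g)) ?_⟩
  exact ((Set.ncard_pos hfin).2 ⟨g, MulAction.mem_orbit_self g⟩).ne'

def IsHyperbolicWith (S : Set K) (δ : ℝ) : Prop :=
  ∀ w x y z : K, min (gromovProd S w x z) (gromovProd S w z y) - δ ≤ gromovProd S w x y

lemma gromovProd_one (x y : K) :
    gromovProd S 1 x y =
      ((wordLength S x : ℝ) + wordLength S y - wordLength S (x⁻¹ * y)) / 2 := by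
  simp [gromovProd, wordDist]

namespace IsHyperbolicWith

lemma nonneg (hδ : IsHyperbolicWith S δ) : 0 ≤ δ := by
  have h := hδ 1 1 1 1
  simp only [gromovProd_one, inv_one, mul_one, wordLength_one, min_self] at h
  linarith

lemma four_point (hδ : IsHyperbolicWith S δ) (w x y z : K) :
    (wordDist S w y : ℝ) + wordDist S x z ≤
      max ((wordDist S x y : ℝ) + wordDist S w z) ((wordDist S x w : ℝ) + wordDist S z y) +
        2 * δ := by
  have h := hδ x w y z
  simp only [gromovProd] at h
  rcases min_cases (((wordDist S x w : ℝ) + wordDist S x z - wordDist S w z) / 2)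
      (((wordDist S x z : ℝ) + wordDist S x y - wordDist S z y) / 2) with ⟨hmin, _⟩ | ⟨hmin, _⟩
  · have := le_max_left ((wordDist S x y : ℝ) + wordDist S w z)
      ((wordDist S x w : ℝ) + wordDist S z y)
    linarith
  · have := le_max_right ((wordDist S x y : ℝ) + wordDist S w z)
      ((wordDist S x w : ℝ) + wordDist S z y)
    linarith

/-- Points at distance `t` from `1` on geodesics from `1` to `x` and to `x'` are `4δ`-close as
long as `t` does not exceed the Gromov product `(x|x')₁`. -/
lemma wordLength_inv_mul_le (hδ : IsHyperbolicWith S δ) {x x' y y' : K} {t : ℕ}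
    (hy : wordLength S y = t) (hyx : t + wordLength S (y⁻¹ * x) = wordLength S x)
    (hy' : wordLength S y' = t) (hyx' : t + wordLength S (y'⁻¹ * x') = wordLength S x')
    (ht : (t : ℝ) ≤ gromovProd S 1 x x') :
    (wordLength S (y⁻¹ * y') : ℝ) ≤ 4 * δ := by
  have hyx : gromovProd S 1 y x = t := by
    rw [gromovProd_one, hy, ← hyx]
    push_cast
    ring
  have hyx' : gromovProd S 1 x' y' = t := by
    rw [gromovProd_one, hy', ← hyx', ← wordLength_inv (x'⁻¹ * y')]
    simp only [mul_inv_rev, inv_inv]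
    push_cast
    ring
  have h₁ : (t : ℝ) - δ ≤ gromovProd S 1 y x' := by
    have := hδ 1 y x' x
    rwa [hyx, min_eq_left ht] at this
  have h₂ : (t : ℝ) - 2 * δ ≤ gromovProd S 1 y y' := by
    have h := hδ 1 y y' x'
    rw [hyx'] at h
    linarith [le_min h₁ (by linarith [hδ.nonneg] : (t : ℝ) - δ ≤ t)]
  rw [gromovProd_one, hy, hy'] at h₂
  linarith

/-- If `u * u` were shorter, the points at distance `t ≈ 2δ + (|u| - m) / 2` from `1` on geodesics
to `u⁻¹` and to `u` would be `4δ`-close, and conjugating `u` by the latter would make it shorter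
than `m`. -/
lemma wordLength_mul_self_ge (hδ : IsHyperbolicWith S δ) (hS : Subgroup.closure S = ⊤) {u : K}
    {m : ℝ} (hm : ∀ w, m ≤ wordLength S (w⁻¹ * u * w)) (hm₀ : 4 * δ + 2 ≤ m) :
    (wordLength S u : ℝ) + m - (4 * δ + 4) ≤ wordLength S (u * u) := by
  by_contra! huu
  set L := wordLength S u
  have hmL : m ≤ L := by simpa using hm 1
  set t := ⌊(4 * δ + L - m) / 2⌋₊ + 1
  have ht₁ : (4 * δ + L - m) / 2 < t := by exact_mod_cast Nat.lt_floor_add_one _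
  have ht₂ : (t : ℝ) ≤ (4 * δ + L - m) / 2 + 1 := by
    have := Nat.floor_le (by linarith [hδ.nonneg] : 0 ≤ (4 * δ + L - m) / 2)
    push_cast [t]
    linarith
  have h2t : 2 * t ≤ L := by exact_mod_cast (by push_cast; linarith : ((2 * t : ℕ) : ℝ) ≤ L)
  obtain ⟨q, hq, hqu⟩ := exists_wordLength_eq_add_wordLength_inv_mul hS (x := u) (t := L - t)
    (by omega)
  obtain ⟨p, hp, hpq⟩ := exists_wordLength_eq_add_wordLength_inv_mul hS (x := q) (t := t)
    (by omega)
  have hpu : t + wordLength S (p⁻¹ * u) = L := by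
    have h₁ := wordLength_mul_le hS (p⁻¹ * q) (q⁻¹ * u)
    have h₂ := wordLength_mul_le hS p (p⁻¹ * u)
    simp only [mul_assoc, mul_inv_cancel_left] at h₁ h₂
    omega
  have hy : wordLength S (u⁻¹ * q) = t := by
    rw [← wordLength_inv, mul_inv_rev, inv_inv]
    omega
  have hyx : t + wordLength S ((u⁻¹ * q)⁻¹ * u⁻¹) = wordLength S u⁻¹ := by
    rw [show (u⁻¹ * q)⁻¹ * u⁻¹ = q⁻¹ by group, wordLength_inv, wordLength_inv]
    omega
  have hclose := hδ.wordLength_inv_mul_le hy hyx hp hpu (by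
    rw [gromovProd_one, inv_inv, wordLength_inv]
    linarith)
  rw [show (u⁻¹ * q)⁻¹ * p = q⁻¹ * u * p by group] at hclose
  have hconj : m ≤ wordLength S (p⁻¹ * q) + wordLength S (q⁻¹ * u * p) := by
    have h := wordLength_mul_le hS (p⁻¹ * q) (q⁻¹ * u * p)
    rw [show p⁻¹ * q * (q⁻¹ * u * p) = p⁻¹ * u * p by group] at h
    exact (hm p).trans (by exact_mod_cast h)
  have hpq' : wordLength S (p⁻¹ * q) + t + t = L := by omega
  have : (wordLength S (p⁻¹ * q) : ℝ) + t + t = L := by exact_mod_cast hpq'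
  linarith

end IsHyperbolicWith

noncomputable def conjLength (S : Set K) (x : K) : ℕ :=
  sInf (Set.range fun w => wordLength S (w⁻¹ * x * w))

lemma conjLength_le (x w : K) : conjLength S x ≤ wordLength S (w⁻¹ * x * w) :=
  Nat.sInf_le ⟨w, rfl⟩

lemma exists_wordLength_conj_eq_conjLength (x : K) :
    ∃ w, wordLength S (w⁻¹ * x * w) = conjLength S x :=
  Nat.sInf_mem (Set.range_nonempty _)

lemma IsHyperbolicWith.conjLength_mul_self_ge (hδ : IsHyperbolicWith S δ)
    (hS : Subgroup.closure S = ⊤) {x : K} (hx : 4 * δ + 2 ≤ conjLength S x) :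
    2 * (conjLength S x : ℝ) - (4 * δ + 4) ≤ conjLength S (x * x) := by
  obtain ⟨w₀, hw₀⟩ := exists_wordLength_conj_eq_conjLength (S := S) (x * x)
  set u := w₀⁻¹ * x * w₀
  have hm : ∀ w, (conjLength S x : ℝ) ≤ wordLength S (w⁻¹ * u * w) := fun w => by
    have := conjLength_le (S := S) x (w₀ * w)
    rw [show (w₀ * w)⁻¹ * x * (w₀ * w) = w⁻¹ * u * w by simp only [u]; group] at this
    exact_mod_cast this
  have hu := hδ.wordLength_mul_self_ge hS hm hx
  rw [show u * u = w₀⁻¹ * (x * x) * w₀ by simp only [u]; group, hw₀] at hu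
  have := hm 1
  simp only [inv_one, one_mul, mul_one] at this
  linarith

lemma IsHyperbolicWith.conjLength_pow_two_pow_ge (hδ : IsHyperbolicWith S δ)
    (hS : Subgroup.closure S = ⊤) {g : K} (hg : 4 * δ + 5 ≤ conjLength S g) (i : ℕ) :
    conjLength S g + i ≤ conjLength S (g ^ 2 ^ i) := by
  induction i with
  | zero => simp
  | succ i ih =>
    have ih' : (conjLength S g : ℝ) + i ≤ conjLength S (g ^ 2 ^ i) := by exact_mod_cast ih
    have h := hδ.conjLength_mul_self_ge hS (x := g ^ 2 ^ i) (by linarith [i.cast_nonneg (α := ℝ)])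
    rw [← pow_add, ← two_mul, ← pow_succ'] at h
    have : (conjLength S g : ℝ) + (i + 1) ≤ conjLength S (g ^ 2 ^ (i + 1)) := by
      linarith [i.cast_nonneg (α := ℝ)]
    exact_mod_cast this

/-- The powers `g ^ 2 ^ i` take finitely many values, yet their conjugacy lengths would be
unbounded. -/
lemma IsHyperbolicWith.conjLength_lt_of_isOfFinOrder (hδ : IsHyperbolicWith S δ)
    (hS : Subgroup.closure S = ⊤) {g : K} (hg : IsOfFinOrder g) :
    (conjLength S g : ℝ) < 4 * δ + 5 := by
  by_contra! hlong
  set B := (Finset.range (orderOf g)).sup fun k => conjLength S (g ^ k)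
  have hB : conjLength S (g ^ 2 ^ B) ≤ B := by
    rw [← pow_mod_orderOf]
    exact Finset.le_sup (f := fun k => conjLength S (g ^ k))
      (Finset.mem_range.2 (Nat.mod_lt _ hg.orderOf_pos))
  have h := hδ.conjLength_pow_two_pow_ge hS hlong B
  have : (0 : ℝ) < conjLength S g := by linarith [hδ.nonneg]
  have : 0 < conjLength S g := by exact_mod_cast this
  omega

lemma finite_fcSubgroup_of_conjLength_le (hS : Subgroup.closure S = ⊤) (hfin : S.Finite) {R : ℕ}
    (hR : ∀ g ∈ fcSubgroup K, conjLength S g ≤ R) : (fcSubgroup K : Set K).Finite := by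
  refine (((finite_setOf_wordLength_le hS hfin R).inter_of_left (fcSubgroup K : Set K)).biUnion
    fun u hu => hu.2).subset fun g hg => ?_
  obtain ⟨w, hw⟩ := exists_wordLength_conj_eq_conjLength (S := S) g
  have hconj : IsConj g (w⁻¹ * g * w) := isConj_iff.2 ⟨w⁻¹, by group⟩
  refine Set.mem_biUnion (x := w⁻¹ * g * w) ⟨(hw.trans_le (hR g hg) : _), ?_⟩ hconj.symm
  rwa [SetLike.mem_coe, mem_fcSubgroup, ← hconj.conjugatesOf_eq]

lemma wordLength_le_conj_add (hS : Subgroup.closure S = ⊤) (x t : K) :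
    wordLength S x ≤ wordLength S (t⁻¹ * x * t) + 2 * wordLength S t := by
  have h₁ := wordLength_mul_le hS (t * (t⁻¹ * x * t)) t⁻¹
  have h₂ := wordLength_mul_le hS t (t⁻¹ * x * t)
  rw [show t * (t⁻¹ * x * t) * t⁻¹ = x by group, wordLength_inv] at h₁
  omega

lemma wordLength_le_conj_add_of_forall_commute (hS : Subgroup.closure S = ⊤) {H : Subgroup K}
    {D : ℕ} (hD : ∀ w, ∃ p ∈ H, wordDist S p w ≤ D) {u : K} (hu : ∀ p ∈ H, Commute p u) (w : K) :
    wordLength S u ≤ wordLength S (w⁻¹ * u * w) + 2 * D := by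
  obtain ⟨p, hp, hpw⟩ := hD w
  have h := wordLength_le_conj_add hS u (p⁻¹ * w)
  have hpu : p * u * p⁻¹ = u := by rw [(hu p hp).eq, mul_inv_cancel_right]
  rw [show (p⁻¹ * w)⁻¹ * u * (p⁻¹ * w) = w⁻¹ * (p * u * p⁻¹) * w by group, hpu] at h
  unfold wordDist at hpw
  omega

lemma finite_setOf_wordLength_pow_le (hS : Subgroup.closure S = ⊤) (hfin : S.Finite) {a : K}
    (ha : ¬IsOfFinOrder a) (R : ℕ) : {k : ℕ | wordLength S (a ^ k) ≤ R}.Finite :=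
  (finite_setOf_wordLength_le hS hfin R).preimage
    (injective_pow_iff_not_isOfFinOrder.2 ha).injOn

lemma exists_pow_forall_wordLength_pow_mul_gt (hS : Subgroup.closure S = ⊤) (hfin : S.Finite)
    {a : K} (ha : ¬IsOfFinOrder a) (R : ℕ) :
    ∃ n, 0 < n ∧ ∀ k, 0 < k → R < wordLength S (a ^ (n * k)) := by
  obtain ⟨N, hN⟩ := (finite_setOf_wordLength_pow_le hS hfin ha R).bddAbove
  refine ⟨N + 1, N.succ_pos, fun k hk => ?_⟩
  by_contra! h
  have := hN h
  nlinarith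

lemma exists_wordLength_pow_mem_Icc (hS : Subgroup.closure S = ⊤) (hfin : S.Finite) {c : K}
    (hc : ¬IsOfFinOrder c) (r : ℕ) :
    ∃ k, 0 < k ∧ r ≤ wordLength S (c ^ k) ∧ wordLength S (c ^ k) ≤ r + wordLength S c := by
  have hex : ∃ k, r ≤ wordLength S (c ^ (k + 1)) := by
    obtain ⟨N, hN⟩ := (finite_setOf_wordLength_pow_le hS hfin hc r).bddAbove
    refine ⟨N, ?_⟩
    by_contra! h
    exact absurd (hN (Set.mem_ofPred.2 h.le)) (by omega)
  refine ⟨Nat.find hex + 1, by omega, Nat.find_spec hex, ?_⟩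
  rcases Nat.eq_zero_or_pos (Nat.find hex) with h0 | hpos
  · simp [h0]
  · have hmin := Nat.find_min hex (show Nat.find hex - 1 < Nat.find hex by omega)
    rw [Nat.sub_add_cancel hpos] at hmin
    have := wordLength_mul_le hS (c ^ Nat.find hex) c
    rw [← pow_succ] at this
    omega

/-- Since `x` and `u` commute, `|x u| = |x⁻¹ u⁻¹|`; the four-point condition on `1, x, x u, u`
bounds `|x⁻¹ u⁻¹| + |x⁻¹ u|` from above and the one on `1, u⁻¹, u, x` bounds their maximum from
below. -/
lemma IsHyperbolicWith.exists_wordLength_inv_mul_le_of_commute (hδ : IsHyperbolicWith S δ)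
    {x u : K} (hxu : Commute x u) (hle : wordLength S x ≤ wordLength S u) :
    ∃ v ∈ ({u, u⁻¹} : Set K), (wordLength S (x⁻¹ * v) : ℝ) + wordLength S x ≤
      3 * wordLength S u - wordLength S (u * u) + 4 * δ := by
  have hux : wordLength S (x * u) = wordLength S (x⁻¹ * u⁻¹) := by
    rw [← wordLength_inv, mul_inv_rev, (hxu.inv_inv).eq]
  have hgeod := hδ 1 u⁻¹ u x
  simp only [gromovProd_one, inv_inv, wordLength_inv, ← hxu.eq, hux] at hgeod
  have hsum := hδ.four_point 1 x (x * u) u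
  have hconj : u⁻¹ * (x * u) = x := by rw [hxu.eq, inv_mul_cancel_left]
  simp only [wordDist, inv_one, one_mul, mul_one, inv_mul_cancel_left, wordLength_inv, hconj,
    hux] at hsum
  have hmax : max ((wordLength S u : ℝ) + wordLength S u) ((wordLength S x : ℝ) + wordLength S x)
      = (wordLength S u : ℝ) + wordLength S u :=
    max_eq_left (by exact_mod_cast Nat.add_le_add hle hle)
  rw [hmax] at hsum
  rcases le_total (wordLength S (x⁻¹ * u⁻¹)) (wordLength S (x⁻¹ * u)) with h | h
  · refine ⟨u⁻¹, Or.inr rfl, ?_⟩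
    have h' : (wordLength S (x⁻¹ * u⁻¹) : ℝ) ≤ wordLength S (x⁻¹ * u) := by exact_mod_cast h
    rw [min_eq_right (by linarith)] at hgeod
    linarith
  · refine ⟨u, Or.inl rfl, ?_⟩
    have h' : (wordLength S (x⁻¹ * u) : ℝ) ≤ wordLength S (x⁻¹ * u⁻¹) := by exact_mod_cast h
    rw [min_eq_left (by linarith)] at hgeod
    linarith

lemma IsHyperbolicWith.exists_mem_zpowers_wordLength_inv_mul_le (hδ : IsHyperbolicWith S δ)
    (hS : Subgroup.closure S = ⊤) (hfin : S.Finite) {c : K} (hc : ¬IsOfFinOrder c) {T : ℝ}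
    (htaut : ∀ k, 0 < k → 2 * (wordLength S (c ^ k) : ℝ) - wordLength S (c ^ k * c ^ k) ≤ T)
    {x : K} (hx : Commute x c) :
    ∃ v ∈ Subgroup.zpowers c, (wordLength S (x⁻¹ * v) : ℝ) ≤ wordLength S c + T + 4 * δ := by
  obtain ⟨k, hk, hxk, hkx⟩ := exists_wordLength_pow_mem_Icc hS hfin hc (wordLength S x)
  obtain ⟨v, hv, hxv⟩ := hδ.exists_wordLength_inv_mul_le_of_commute (hx.pow_right k) hxk
  refine ⟨v, ?_, ?_⟩
  · have hck := Subgroup.npow_mem_zpowers c k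
    rcases hv with rfl | rfl
    exacts [hck, (Subgroup.zpowers c).inv_mem hck]
  · have hkx' : (wordLength S (c ^ k) : ℝ) ≤ wordLength S x + wordLength S c := by
      exact_mod_cast hkx
    linarith [htaut k hk]

theorem IsHyperbolicWith.isElementary_of_finiteIndex_centralizer (hδ : IsHyperbolicWith S δ)
    (hS : Subgroup.closure S = ⊤) (hfin : S.Finite) {a : K} (ha : ¬IsOfFinOrder a)
    [(Subgroup.centralizer {a}).FiniteIndex] : IsElementary K := by
  obtain ⟨D, hD⟩ := exists_wordDist_le_of_finiteIndex (S := S) (Subgroup.centralizer {a})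
  obtain ⟨n, hn, hlong⟩ := exists_pow_forall_wordLength_pow_mul_gt hS hfin ha ⌈4 * δ + 2 * D + 2⌉₊
  -- every positive power of `c` is long enough for `wordLength_mul_self_ge` with `m = |c^k| - 2D`
  set c := a ^ n
  have hc : ¬IsOfFinOrder c := by simpa [c, isOfFinOrder_pow, hn.ne'] using ha
  have hcomm : ∀ p ∈ Subgroup.centralizer {a}, Commute p c := fun p hp =>
    (show Commute p a from Subgroup.mem_centralizer_singleton_iff.1 hp).pow_right n
  have htaut : ∀ k, 0 < k →
      2 * (wordLength S (c ^ k) : ℝ) - wordLength S (c ^ k * c ^ k) ≤ 4 * δ + 2 * D + 4 := by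
    intro k hk
    have hm : ∀ w, (wordLength S (c ^ k) : ℝ) - 2 * D ≤ wordLength S (w⁻¹ * c ^ k * w) := by
      intro w
      have h := wordLength_le_conj_add_of_forall_commute hS hD
        (fun p hp => (hcomm p hp).pow_right k) w
      have h' : (wordLength S (c ^ k) : ℝ) ≤ wordLength S (w⁻¹ * c ^ k * w) + 2 * D := by
        exact_mod_cast h
      linarith
    have hlong' : 4 * δ + 2 * D + 2 < (wordLength S (c ^ k) : ℝ) := by
      have h := hlong k hk
      rw [pow_mul] at h
      exact (Nat.le_ceil _).trans_lt (by exact_mod_cast h)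
    have := hδ.wordLength_mul_self_ge hS hm (by linarith)
    linarith
  have hcobounded : ∀ w, ∃ v ∈ Subgroup.zpowers c,
      wordDist S v w ≤ ⌈wordLength S c + (4 * δ + 2 * D + 4) + 4 * δ⌉₊ + D := by
    intro w
    obtain ⟨p, hp, hpw⟩ := hD w
    obtain ⟨v, hv, hpv⟩ :=
      hδ.exists_mem_zpowers_wordLength_inv_mul_le hS hfin hc htaut (hcomm p hp)
    refine ⟨v, hv, ?_⟩
    have h := wordLength_mul_le hS (v⁻¹ * p) (p⁻¹ * w)
    rw [show v⁻¹ * p * (p⁻¹ * w) = v⁻¹ * w by group, ← wordLength_inv (v⁻¹ * p), mul_inv_rev,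
      inv_inv] at h
    have hpv' : wordLength S (p⁻¹ * v) ≤ ⌈wordLength S c + (4 * δ + 2 * D + 4) + 4 * δ⌉₊ := by
      exact_mod_cast hpv.trans (Nat.le_ceil _)
    unfold wordDist at hpw ⊢
    omega
  exact ⟨_, finiteIndex_of_forall_exists_wordDist_le hS hfin hcobounded, inferInstance⟩

end WordHyperbolic

open WordHyperbolic in
/-- A nonelementary word hyperbolic group K is icc iff FC(K) = 1; moreover FC(K) is a
finite characteristic subgroup of K. -/
theorem hyperbolic_icc_iff {K : Type*} [Group K]
    (hhyp : IsWordHyperbolic K) (hne : ¬ IsElementary K) :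
    (IsICC K ↔ {g : K | {h : K | IsConj g h}.Finite} = {1}) ∧
    ∃ F : Subgroup K, (F : Set K) = {g : K | {h : K | IsConj g h}.Finite} ∧
      Finite F ∧ F.Characteristic := by
  obtain ⟨S, hS, δ, hδ⟩ := hhyp
  have hδ : IsHyperbolicWith (S : Set K) δ := hδ
  have htorsion : ∀ g ∈ fcSubgroup K, IsOfFinOrder g := fun g hg => by
    by_contra hg'
    have := finiteIndex_centralizer_of_mem_fcSubgroup hg
    exact hne (hδ.isElementary_of_finiteIndex_centralizer hS S.finite_toSet hg')
  have hfinite : (fcSubgroup K : Set K).Finite :=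
    finite_fcSubgroup_of_conjLength_le hS S.finite_toSet (R := ⌈4 * δ + 5⌉₊) fun g hg => by
      exact_mod_cast (hδ.conjLength_lt_of_isOfFinOrder hS (htorsion g hg)).le.trans (Nat.le_ceil _)
  have : Nontrivial K := not_subsingleton_iff_nontrivial.1 fun _ => hne (isElementary_of_finite K)
  exact ⟨isICC_iff_fcSubgroup_eq.trans (and_iff_right ‹_›), fcSubgroup K, rfl, hfinite.to_subtype,
    inferInstance⟩
end
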